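/- arXiv:1506.01345 — 2 statements merged into one kernel-verified Lean document; each statement's English description precedes it below -/
import Mathlib

section
/- Let π ∈ NC(n) and 1 ≤ p < q ≤ n. Then the set [2p, 2q−1] ∩ ℤ is a union of blocks of the arch-diagram A(π) ∈ NCP(2n) if and only if p and q belong to the same block of π. -/
open scoped Classical

/-- A setoid (partition) of `Fin n` is non-crossing if there is no crossing
`a < b < c < d` with `a ∼ c`, `b ∼ d` but `a` and `b` in distinct blocks. -/
def IsNC {n : ℕ} (S : Setoid (Fin n)) : Prop :=
  ∀ a b c d : Fin n, a < b → b < c → c < d → S.r a c → S.r b d → S.r a b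

/-- A partition is a pairing if every block has exactly two elements. -/
def IsPairing {m : ℕ} (T : Setoid (Fin m)) : Prop :=
  ∀ x : Fin m, ∃ y : Fin m, y ≠ x ∧ T.r x y ∧ ∀ z : Fin m, T.r x z → z = x ∨ z = y

/-- The block of `i` in the partition `S`, as a finset. -/
noncomputable def blockOf {n : ℕ} (S : Setoid (Fin n)) (i : Fin n) : Finset (Fin n) :=
  Finset.univ.filter (fun j => S.r i j)

lemma blockOf_nonempty {n : ℕ} (S : Setoid (Fin n)) (i : Fin n) :
    (blockOf S i).Nonempty :=
  ⟨i, by simp [blockOf, S.iseqv.refl i]⟩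

/-- The permutation `P_S` which performs an increasing cycle on every block of `S`:
it sends `i` to the next larger element of its block, or to the minimum of the
block if `i` is the largest element of its block. -/
noncomputable def nextP {n : ℕ} (S : Setoid (Fin n)) (i : Fin n) : Fin n :=
  if h : ((blockOf S i).filter (fun j => i < j)).Nonempty
  then ((blockOf S i).filter (fun j => i < j)).min' h
  else (blockOf S i).min' (blockOf_nonempty S i)

/-- The inverse permutation `P_S⁻¹` (decreasing cycle on every block of `S`). -/
noncomputable def prevP {n : ℕ} (S : Setoid (Fin n)) (i : Fin n) : Fin n :=
  if h : ((blockOf S i).filter (fun j => j < i)).Nonempty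
  then ((blockOf S i).filter (fun j => j < i)).max' h
  else (blockOf S i).max' (blockOf_nonempty S i)

/-- `0`-indexed version of the point `2i-1` of `{1,…,2n}`. -/
def dEven {n : ℕ} (j : Fin n) : Fin (2*n) := ⟨2*j.val, by have := j.isLt; omega⟩

/-- `0`-indexed version of the point `2i` of `{1,…,2n}`. -/
def dOdd {n : ℕ} (j : Fin n) : Fin (2*n) := ⟨2*j.val+1, by have := j.isLt; omega⟩

/-- The doubling construction `π ↦ A(π)`: the pairing of `{1,…,2n}` generated by
pairing each point `2i` with `2P_π(i) - 1`, so that the associated permutation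
satisfies `P_{A(π)}(2i) = 2P_π(i) - 1` and `P_{A(π)}(2i-1) = 2P_π⁻¹(i)`. -/
noncomputable def archSetoid {n : ℕ} (S : Setoid (Fin n)) : Setoid (Fin (2*n)) :=
  Relation.EqvGen.setoid (fun a b => ∃ j : Fin n, a = dOdd j ∧ b = dEven (nextP S j))

/-- The meandric system permutation `M_{π,ρ} ∈ S_{2n}`, defined by
`M_{π,ρ}(2i-1) = 2P_π⁻¹(i)` and `M_{π,ρ}(2i) = 2P_ρ(i) - 1` (here `0`-indexed). -/
noncomputable def meanderMap {n : ℕ} (π ρ : Setoid (Fin n)) (x : Fin (2*n)) : Fin (2*n) :=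
  if x.val % 2 = 0
  then dOdd (prevP π ⟨x.val / 2, by have := x.isLt; omega⟩)
  else dEven (nextP ρ ⟨x.val / 2, by have := x.isLt; omega⟩)

/-- The orbit partition of a map. -/
def orbitSetoid {m : ℕ} (f : Fin m → Fin m) : Setoid (Fin m) :=
  Relation.EqvGen.setoid (fun a b => f a = b)

/-- Number of orbits of a map. -/
noncomputable def numOrbits {m : ℕ} (f : Fin m → Fin m) : ℕ :=
  Nat.card (Quotient (orbitSetoid f))

/-- `S` is a union of blocks of the partition `T`. -/
def IsBlockUnion {m : ℕ} (T : Setoid (Fin m)) (S : Set (Fin m)) : Prop :=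
  ∀ x ∈ S, ∀ y, T.r x y → y ∈ S

/-- `S` is invariant under `f`. -/
def MInvariant {m : ℕ} (f : Fin m → Fin m) (S : Set (Fin m)) : Prop :=
  ∀ x ∈ S, f x ∈ S

/-- The meandric system `M_{π,ρ}` is reducible: some proper subinterval
`{a,…,b}` of `{1,…,2n}` is invariant under `M_{π,ρ}`. -/
noncomputable def Reducible {n : ℕ} (π ρ : Setoid (Fin n)) : Prop :=
  ∃ a b : Fin (2*n), a ≤ b ∧ b.val - a.val < 2*n - 1 ∧
    MInvariant (meanderMap π ρ) {x | a ≤ x ∧ x ≤ b}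

/-- The join in the lattice of non-crossing partitions: the smallest
non-crossing partition above both `π` and `ρ`. -/
noncomputable def ncJoin {m : ℕ} (π ρ : Setoid (Fin m)) : Setoid (Fin m) :=
  sInf {τ | IsNC τ ∧ π ≤ τ ∧ ρ ≤ τ}

/-- The moment-cumulant formula of free probability: `mom n` is the sum over all
non-crossing partitions of `{1,…,n}` of the products of cumulants `κ` indexed
by the block sizes.  This uniquely determines the free cumulants `κ n`, `n ≥ 1`,
of a sequence of moments. -/
def MomCum {F : Type*} [Field F] (mom κ : ℕ → F) : Prop :=
  ∀ n : ℕ, 0 < n →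
    mom n = ∑ᶠ S ∈ {S : Setoid (Fin n) | IsNC S}, ∏ᶠ B ∈ Setoid.classes S, κ B.ncard

/-- The number of irreducible meandric systems on `2k` bridges, described as the
number of pairs `(π,ρ) ∈ NC(k)²` with `π ∨ ρ = 1_k`, `π ∧ ρ = 0_k`. -/
noncomputable def mirr (k : ℕ) : ℕ :=
  Nat.card {pr : Setoid (Fin k) × Setoid (Fin k) //
    IsNC pr.1 ∧ IsNC pr.2 ∧ ncJoin pr.1 pr.2 = ⊤ ∧ pr.1 ⊓ pr.2 = ⊥}

/-- The number of pairs `(π,ρ) ∈ NC(n)²` whose meandric system `M_{π,ρ}` has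
exactly `k` orbits (connected components). -/
noncomputable def mcount (n k : ℕ) : ℕ :=
  Nat.card {pr : Setoid (Fin n) × Setoid (Fin n) //
    IsNC pr.1 ∧ IsNC pr.2 ∧ numOrbits (meanderMap pr.1 pr.2) = k}

/-- The number of meanders on `2n` bridges. -/
noncomputable def meanderNum (n : ℕ) : ℕ := mcount n 1

/-! The arches of `A(π)` join `2j+1` to `2 P_π(j)` (`0`-indexed), so the interval is a union of
blocks exactly when `P_π⁻¹ (p, q] = [p, q)`. If so, `P_π` sends the largest element `m < q` of the
block of `p` into `(p, q]` without wrapping around to the block minimum, hence onto `q`. Conversely,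
if `p ∼ q` then by non-crossing every other block meeting `(p, q)` lies inside `(p, q)`, while on
the block of `p` the map `P_π` steps from `[p, q)` into `(p, q]`. -/

open Set

section BlockUnion

variable {m : ℕ}

theorem isBlockUnion_iff_le_ker (T : Setoid (Fin m)) (s : Set (Fin m)) :
    IsBlockUnion T s ↔ T ≤ Setoid.ker (· ∈ s) :=
  ⟨fun h a b hab => propext ⟨fun ha => h a ha b hab, fun hb => h b hb a (T.symm hab)⟩,
    fun h _ ha _ hab => Setoid.ker_def.mp (h hab) ▸ ha⟩

theorem isBlockUnion_eqvGen_setoid_iff (r : Fin m → Fin m → Prop) (s : Set (Fin m)) :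
    IsBlockUnion (Relation.EqvGen.setoid r) s ↔ ∀ a b, r a b → (a ∈ s ↔ b ∈ s) := by
  rw [isBlockUnion_iff_le_ker, Setoid.gi.gc.le_iff_le]
  exact forall₂_congr fun _ _ => imp_congr_right fun _ => eq_iff_iff

end BlockUnion

section NextP

variable {n : ℕ} (S : Setoid (Fin n)) {j k : Fin n}

theorem rel_nextP (j : Fin n) : S.r j (nextP S j) := by
  unfold nextP
  split_ifs with h
  · exact (Finset.mem_filter.mp (Finset.mem_filter.mp (Finset.min'_mem _ h)).1).2
  · exact (Finset.mem_filter.mp (Finset.min'_mem _ _)).2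

theorem lt_nextP_and_nextP_le (hk : S.r j k) (hjk : j < k) :
    j < nextP S j ∧ nextP S j ≤ k := by
  have hmem : k ∈ (blockOf S j).filter (j < ·) := by simp [blockOf, hk, hjk]
  rw [nextP, dif_pos ⟨k, hmem⟩]
  exact ⟨(Finset.mem_filter.mp (Finset.min'_mem _ _)).2, Finset.min'_le _ _ hmem⟩

theorem nextP_le_of_nextP_le_self (h : nextP S j ≤ j) (hk : S.r j k) : nextP S j ≤ k := by
  have hc : ¬ ((blockOf S j).filter (j < ·)).Nonempty := by
    rintro ⟨l, hl⟩
    simp only [blockOf, Finset.mem_filter, Finset.mem_univ, true_and] at hl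
    exact h.not_gt (lt_nextP_and_nextP_le S hl.1 hl.2).1
  rw [nextP, dif_neg hc]
  exact Finset.min'_le _ _ (by simp [blockOf, hk])

end NextP

theorem isBlockUnion_archSetoid_iff {n : ℕ} (S : Setoid (Fin n)) (s : Set (Fin (2*n))) :
    IsBlockUnion (archSetoid S) s ↔ ∀ j, dOdd j ∈ s ↔ dEven (nextP S j) ∈ s := by
  rw [archSetoid, isBlockUnion_eqvGen_setoid_iff]
  refine ⟨fun h j => h _ _ ⟨j, rfl, rfl⟩, ?_⟩
  rintro h _ _ ⟨j, rfl, rfl⟩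
  exact h j

theorem isBlockUnion_archSetoid_interval_iff {n : ℕ} (S : Setoid (Fin n)) (p q : Fin n) :
    IsBlockUnion (archSetoid S) {x : Fin (2*n) | 2*p.val + 1 ≤ x.val ∧ x.val ≤ 2*q.val} ↔
      nextP S ⁻¹' Ioc p q = Ico p q := by
  rw [isBlockUnion_archSetoid_iff, Set.ext_iff]
  refine forall_congr' fun j => ?_
  simp only [dOdd, dEven, mem_ofPred_eq, mem_preimage, mem_Ioc, mem_Ico, Fin.lt_def, Fin.le_def]
  omega

theorem rel_of_mapsTo_nextP {n : ℕ} {S : Setoid (Fin n)} {p q : Fin n} (hpq : p < q)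
    (h : MapsTo (nextP S) (Ico p q) (Ioc p q)) : S.r p q := by
  let T := (blockOf S p).filter (· < q)
  have mem_T {k : Fin n} : k ∈ T ↔ S.r p k ∧ k < q := by simp [T, blockOf]
  have hpT : p ∈ T := mem_T.mpr ⟨S.refl p, hpq⟩
  let m := T.max' ⟨p, hpT⟩
  have hmT : S.r p m ∧ m < q := mem_T.mp (T.max'_mem _)
  obtain ⟨hp_next, hnext_q⟩ := h ⟨T.le_max' p hpT, hmT.2⟩
  have hp_rel_next : S.r p (nextP S m) := S.trans hmT.1 (rel_nextP S m)
  rcases hnext_q.lt_or_eq with hlt | heq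
  · have hwrap : nextP S m ≤ m := T.le_max' _ (mem_T.mpr ⟨hp_rel_next, hlt⟩)
    exact absurd (nextP_le_of_nextP_le_self S hwrap (S.symm hmT.1)) hp_next.not_ge
  · exact heq ▸ hp_rel_next

theorem IsNC.mem_Ioo_of_rel {n : ℕ} {S : Setoid (Fin n)} (hS : IsNC S) {p q j k : Fin n}
    (hpq : S.r p q) (hj : j ∈ Ioo p q) (hpj : ¬ S.r p j) (hjk : S.r j k) : k ∈ Ioo p q := by
  obtain ⟨hpj', hjq⟩ := hj
  refine ⟨lt_of_not_ge fun hkp => hpj ?_, lt_of_not_ge fun hqk => hpj ?_⟩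
  · rcases hkp.lt_or_eq with hkp | rfl
    · exact S.trans (S.symm (hS k p j q hkp hpj' hjq (S.symm hjk) hpq)) (S.symm hjk)
    · exact S.symm hjk
  · rcases hqk.lt_or_eq with hqk | rfl
    · exact hS p j q k hpj' hjq hqk hpq hjk
    · exact S.trans hpq (S.symm hjk)

theorem IsNC.preimage_nextP_Ioc {n : ℕ} {S : Setoid (Fin n)} (hS : IsNC S) {p q : Fin n}
    (hpq : S.r p q) : nextP S ⁻¹' Ioc p q = Ico p q := by
  ext j
  by_cases hpj : S.r p j
  · constructor
    · rintro ⟨hp, hq⟩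
      refine ⟨le_of_not_gt fun hjp => hp.not_ge (lt_nextP_and_nextP_le S (S.symm hpj) hjp).2,
        lt_of_not_ge fun hqj => ?_⟩
      rcases le_or_gt (nextP S j) j with hwrap | hlt
      · exact hp.not_ge (nextP_le_of_nextP_le_self S hwrap (S.symm hpj))
      · exact (hlt.trans_le (hq.trans hqj)).false
    · rintro ⟨hp, hq⟩
      obtain ⟨hj_next, hnext_q⟩ := lt_nextP_and_nextP_le S (S.trans (S.symm hpj) hpq) hq
      exact ⟨hp.trans_lt hj_next, hnext_q⟩
  · have hp_next : ¬ S.r p (nextP S j) := fun h => hpj (S.trans h (S.symm (rel_nextP S j)))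
    constructor
    · rintro ⟨hp, hq⟩
      have hq' : nextP S j < q := hq.lt_of_ne fun h => hp_next (h ▸ hpq)
      exact Ioo_subset_Ico_self (hS.mem_Ioo_of_rel hpq ⟨hp, hq'⟩ hp_next (S.symm (rel_nextP S j)))
    · rintro ⟨hp, hq⟩
      have hp' : p < j := hp.lt_of_ne fun h => hpj (h ▸ S.refl p)
      exact Ioo_subset_Ioc_self (hS.mem_Ioo_of_rel hpq ⟨hp', hq⟩ hpj (rel_nextP S j))

/-- For `π ∈ NC(n)` and `1 ≤ p < q ≤ n` (here `0`-indexed): the interval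
`[2p, 2q-1] ∩ ℤ` is a union of blocks of `A(π)` iff `p` and `q` belong to the
same block of `π`. -/
theorem interval_blockUnion_arch_iff_same_block (n : ℕ) (S : Setoid (Fin n))
    (hS : IsNC S) (p q : Fin n) (hpq : p < q) :
    IsBlockUnion (archSetoid S)
        {x : Fin (2*n) | 2*p.val + 1 ≤ x.val ∧ x.val ≤ 2*q.val}
      ↔ S.r p q := by
  rw [isBlockUnion_archSetoid_interval_iff]
  exact ⟨fun h => rel_of_mapsTo_nextP hpq (mapsTo_iff_subset_preimage.mpr h.ge),
    hS.preimage_nextP_Ioc⟩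
end

section
/- For π, ρ ∈ NC(n), the meandric system M_{π,ρ} is irreducible (i.e., no proper subinterval of {1,...,2n} is invariant under M_{π,ρ}) if and only if A(π) ∨ A(ρ) = 1_{2n}, where the join is taken in the lattice NC(2n). -/
open scoped Classical

/-! The arch diagrams `A(π)` and `A(ρ)` are pairings whose composite is `M_{π,ρ}`, so their join
among all partitions is the orbit partition of `M_{π,ρ}`. An invariant proper interval `I` yields
the non-crossing partition `{I, Iᶜ}` above both, so the join in `NC(2n)` is not `1_{2n}`.
Conversely, a non-crossing partition `τ ≠ 1_{2n}` above the orbits has an interval block, and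
that interval is invariant because `τ` relates every `x` with `M_{π,ρ} x`. -/

section ArchDiagrams

variable {n : ℕ}

lemma mem_blockOf {S : Setoid (Fin n)} {i j : Fin n} : j ∈ blockOf S i ↔ S i j := by
  simp [blockOf]

lemma blockOf_eq {S : Setoid (Fin n)} {i j : Fin n} (h : S i j) : blockOf S i = blockOf S j := by
  ext k
  simp only [mem_blockOf]
  exact ⟨S.trans' (S.symm' h), S.trans' h⟩

lemma nextP_rel (S : Setoid (Fin n)) (i : Fin n) : S i (nextP S i) := by
  unfold nextP
  split_ifs with h
  · exact mem_blockOf.1 (Finset.mem_filter.1 (Finset.min'_mem _ h)).1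
  · exact mem_blockOf.1 (Finset.min'_mem _ _)

lemma prevP_leftInverse_nextP (S : Setoid (Fin n)) :
    Function.LeftInverse (prevP S) (nextP S) := by
  intro i
  set B := blockOf S i
  have hi : i ∈ B := mem_blockOf.2 (S.refl' i)
  have hB : blockOf S (nextP S i) = B := (blockOf_eq (nextP_rel S i)).symm
  unfold prevP
  simp only [hB]
  by_cases h : (B.filter (i < ·)).Nonempty
  · have hj : nextP S i = (B.filter (i < ·)).min' h := dif_pos h
    have hij : i < nextP S i := by rw [hj]; exact (Finset.mem_filter.1 (Finset.min'_mem _ h)).2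
    have hbelow : i ∈ B.filter (· < nextP S i) := Finset.mem_filter.2 ⟨hi, hij⟩
    rw [dif_pos ⟨i, hbelow⟩, Finset.max'_eq_iff]
    refine ⟨hbelow, fun k hk => not_lt.1 fun hik => ?_⟩
    obtain ⟨hkB, hkj⟩ := Finset.mem_filter.1 hk
    exact (hj.trans_le (Finset.min'_le _ k (Finset.mem_filter.2 ⟨hkB, hik⟩))).not_gt hkj
  · have hj : nextP S i = B.min' (blockOf_nonempty S i) := dif_neg h
    have hnone : ¬ (B.filter (· < nextP S i)).Nonempty := fun ⟨k, hk⟩ =>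
      (hj.trans_le (Finset.min'_le B k (Finset.mem_filter.1 hk).1)).not_gt
        (Finset.mem_filter.1 hk).2
    rw [dif_neg hnone, Finset.max'_eq_iff]
    exact ⟨hi, fun k hk => not_lt.1 fun hik => h ⟨k, Finset.mem_filter.2 ⟨hk, hik⟩⟩⟩

lemma nextP_leftInverse_prevP (S : Setoid (Fin n)) :
    Function.LeftInverse (nextP S) (prevP S) :=
  (prevP_leftInverse_nextP S).rightInverse_of_surjective
    (Finite.surjective_of_injective (prevP_leftInverse_nextP S).injective)

lemma dEven_injective : Function.Injective (dEven (n := n)) := fun i j h => by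
  simpa [dEven, Fin.ext_iff] using h

lemma dOdd_injective : Function.Injective (dOdd (n := n)) := fun i j h => by
  simpa [dOdd, Fin.ext_iff] using h

lemma dOdd_ne_dEven (i j : Fin n) : dOdd i ≠ dEven j := by
  simp only [dOdd, dEven, ne_eq, Fin.ext_iff]
  omega

lemma exists_eq_dEven_or_dOdd (x : Fin (2 * n)) : ∃ i, x = dEven i ∨ x = dOdd i :=
  ⟨⟨x / 2, by omega⟩, by simp only [dEven, dOdd, Fin.ext_iff]; omega⟩

lemma archSetoid_dOdd_dEven (S : Setoid (Fin n)) (j : Fin n) :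
    archSetoid S (dOdd j) (dEven (nextP S j)) :=
  Relation.EqvGen.rel _ _ ⟨j, rfl, rfl⟩

lemma meanderMap_dEven (π ρ : Setoid (Fin n)) (i : Fin n) :
    meanderMap π ρ (dEven i) = dOdd (prevP π i) := by
  simp [meanderMap, dEven]

lemma meanderMap_dOdd (π ρ : Setoid (Fin n)) (i : Fin n) :
    meanderMap π ρ (dOdd i) = dEven (nextP ρ i) := by
  simp [meanderMap, dOdd, Nat.mul_add_div]

lemma meanderMap_injective (π ρ : Setoid (Fin n)) : Function.Injective (meanderMap π ρ) := by
  intro x y hxy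
  obtain ⟨i, rfl | rfl⟩ := exists_eq_dEven_or_dOdd x <;>
  obtain ⟨j, rfl | rfl⟩ := exists_eq_dEven_or_dOdd y <;>
  simp only [meanderMap_dEven, meanderMap_dOdd] at hxy
  · rw [(nextP_leftInverse_prevP π).injective (dOdd_injective hxy)]
  · exact absurd hxy (dOdd_ne_dEven _ _)
  · exact absurd hxy.symm (dOdd_ne_dEven _ _)
  · rw [(prevP_leftInverse_nextP ρ).injective (dEven_injective hxy)]

lemma archSetoid_sup_archSetoid (π ρ : Setoid (Fin n)) :
    archSetoid π ⊔ archSetoid ρ = orbitSetoid (meanderMap π ρ) := by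
  apply le_antisymm
  · refine sup_le (Setoid.eqvGen_le ?_) (Setoid.eqvGen_le ?_) <;> rintro _ _ ⟨j, rfl, rfl⟩
    · refine Relation.EqvGen.symm _ _ (Relation.EqvGen.rel _ _ ?_)
      rw [meanderMap_dEven, prevP_leftInverse_nextP]
    · exact Relation.EqvGen.rel _ _ (meanderMap_dOdd π ρ j)
  · refine Setoid.eqvGen_le fun x _ hxy => hxy ▸ ?_
    obtain ⟨i, rfl | rfl⟩ := exists_eq_dEven_or_dOdd x
    · rw [meanderMap_dEven]
      have h := archSetoid_dOdd_dEven π (prevP π i)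
      rw [nextP_leftInverse_prevP] at h
      exact le_sup_left (a := archSetoid π) (Setoid.symm' _ h)
    · rw [meanderMap_dOdd]
      exact le_sup_right (a := archSetoid π) (archSetoid_dOdd_dEven ρ i)

end ArchDiagrams

section NonCrossing

variable {m : ℕ} {τ : Setoid (Fin m)}

lemma IsNC.mem_Ioo_of_rel_s5 (hτ : IsNC τ) {lo hi x y : Fin m} (hlh : τ lo hi) (hlx : lo < x)
    (hxh : x < hi) (hx : ¬ τ lo x) (hxy : τ x y) : y ∈ Set.Ioo lo hi := by
  have hy : ¬ τ lo y := fun h => hx (τ.trans' h (τ.symm' hxy))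
  constructor
  · by_contra! hyl
    rcases hyl.lt_or_eq with hyl | rfl
    · exact hy (τ.symm' (hτ y lo x hi hyl hlx hxh (τ.symm' hxy) hlh))
    · exact hy (τ.refl' _)
  · by_contra! hhy
    rcases hhy.lt_or_eq with hhy | rfl
    · exact hx (hτ lo x hi y hlx hxh hhy hlh hxy)
    · exact hy hlh

/-- The block of smallest diameter is an interval: a gap in it would carry a block nested
strictly inside. -/
lemma IsNC.exists_Icc_block (hτ : IsNC τ) (hne : τ ≠ ⊤) :
    ∃ lo hi : Fin m, hi.val - lo.val < m - 1 ∧ ∀ x, τ lo x ↔ x ∈ Set.Icc lo hi := by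
  obtain ⟨x₀, -, -⟩ : ∃ x y, ¬ τ x y := by simpa [Setoid.eq_top_iff] using hne
  let lo i := (blockOf τ i).min' (blockOf_nonempty τ i)
  let hi i := (blockOf τ i).max' (blockOf_nonempty τ i)
  have hlo i : τ i (lo i) := mem_blockOf.1 (Finset.min'_mem _ _)
  have hhi i : τ i (hi i) := mem_blockOf.1 (Finset.max'_mem _ _)
  have hbounds i x (h : τ i x) : x ∈ Set.Icc (lo i) (hi i) :=
    ⟨Finset.min'_le _ _ (mem_blockOf.2 h), Finset.le_max' _ _ (mem_blockOf.2 h)⟩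
  obtain ⟨i, -, hmin⟩ := Finset.exists_min_image Finset.univ
    (fun i => (hi i).val - (lo i).val) ⟨x₀, Finset.mem_univ _⟩
  have hlohi : τ (lo i) (hi i) := τ.trans' (τ.symm' (hlo i)) (hhi i)
  have hint : ∀ x ∈ Set.Icc (lo i) (hi i), τ (lo i) x := by
    rintro x ⟨hlx, hxh⟩
    by_contra hx
    have hlx' : lo i < x := hlx.lt_of_ne (by rintro rfl; exact hx (τ.refl' _))
    have hxh' : x < hi i := hxh.lt_of_ne (by rintro rfl; exact hx hlohi)
    have hlo_x := hτ.mem_Ioo_of_rel_s5 hlohi hlx' hxh' hx (hlo x)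
    have hhi_x := hτ.mem_Ioo_of_rel_s5 hlohi hlx' hxh' hx (hhi x)
    have hx_le := (hbounds x x (τ.refl' x)).1.trans (hbounds x x (τ.refl' x)).2
    have := hmin x (Finset.mem_univ _)
    simp only [Set.mem_Ioo, Fin.lt_def, Fin.le_def] at hlo_x hhi_x hx_le
    omega
  refine ⟨lo i, hi i, ?_, fun x => ⟨fun h => hbounds i x (τ.trans' (hlo i) h), hint x⟩⟩
  by_contra! hlong
  refine hne (Setoid.eq_top_iff.2 fun x y => τ.trans' (τ.symm' (hint x ?_)) (hint y ?_)) <;>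
    simp only [Set.mem_Icc, Fin.le_def] <;> omega

lemma isNC_ker_mem_Icc (a b : Fin m) : IsNC (Setoid.ker (· ∈ Set.Icc a b)) := by
  intro p q r s hpq hqr hrs hpr hqs
  simp only [Setoid.ker_def, eq_iff_iff, Set.mem_Icc, Fin.le_def, Fin.lt_def] at *
  omega

end NonCrossing

section Invariant

variable {m : ℕ} {f : Fin m → Fin m}

lemma MInvariant.mem_of_apply_mem (hf : Function.Injective f) {S : Set (Fin m)}
    (hS : MInvariant f S) {x : Fin m} (hx : f x ∈ S) : x ∈ S := by
  obtain ⟨y, hy, hyx⟩ :=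
    ((S.toFinite.injOn_iff_bijOn_of_mapsTo fun y hy => hS y hy).1 hf.injOn).surjOn hx
  exact hf hyx ▸ hy

lemma orbitSetoid_le_ker_mem (hf : Function.Injective f) {S : Set (Fin m)}
    (hS : MInvariant f S) : orbitSetoid f ≤ Setoid.ker (· ∈ S) :=
  Setoid.eqvGen_le fun x _ hxy => hxy ▸ Setoid.ker_def.2
    (propext ⟨hS x, hS.mem_of_apply_mem hf⟩)

lemma orbitSetoid_rel_apply (x : Fin m) : orbitSetoid f x (f x) :=
  Relation.EqvGen.rel _ _ rfl

theorem exists_invariant_Icc_iff (hf : Function.Injective f) :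
    (∃ a b : Fin m, a ≤ b ∧ b.val - a.val < m - 1 ∧ MInvariant f (Set.Icc a b)) ↔
      sInf {τ | IsNC τ ∧ orbitSetoid f ≤ τ} ≠ ⊤ := by
  constructor
  · rintro ⟨a, b, hab, hlen, hinv⟩ htop
    have hle : sInf {τ | IsNC τ ∧ orbitSetoid f ≤ τ} ≤ Setoid.ker (· ∈ Set.Icc a b) :=
      sInf_le ⟨isNC_ker_mem_Icc a b, orbitSetoid_le_ker_mem hf hinv⟩
    rw [htop, top_le_iff, Setoid.eq_top_iff] at hle
    have hall y : y ∈ Set.Icc a b := Setoid.ker_def.1 (hle a y) ▸ ⟨le_rfl, hab⟩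
    have h0 := hall ⟨0, by omega⟩
    have hlast := hall ⟨m - 1, by omega⟩
    simp only [Set.mem_Icc, Fin.le_def] at h0 hlast
    omega
  · intro hne
    obtain ⟨τ, ⟨hτ, hfτ⟩, hτne⟩ : ∃ τ ∈ {τ | IsNC τ ∧ orbitSetoid f ≤ τ}, τ ≠ ⊤ := by
      by_contra! h
      exact hne (sInf_eq_top.2 h)
    obtain ⟨lo, hi, hlen, hblock⟩ := hτ.exists_Icc_block hτne
    refine ⟨lo, hi, ((hblock lo).1 (τ.refl' _)).2, hlen, fun x hx => (hblock _).1 ?_⟩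
    exact τ.trans' ((hblock x).2 hx) (hfτ (orbitSetoid_rel_apply x))

end Invariant

theorem irreducible_iff_arch_ncJoin_top_general (n : ℕ) (π ρ : Setoid (Fin n)) :
    ¬ Reducible π ρ ↔ ncJoin (archSetoid π) (archSetoid ρ) = ⊤ := by
  have hjoin : ncJoin (archSetoid π) (archSetoid ρ) =
      sInf {τ | IsNC τ ∧ orbitSetoid (meanderMap π ρ) ≤ τ} := by
    simp only [ncJoin, ← archSetoid_sup_archSetoid, sup_le_iff]
  rw [hjoin]
  exact (exists_invariant_Icc_iff (meanderMap_injective π ρ)).not_left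

/-- `M_{π,ρ}` is irreducible iff `A(π) ∨ A(ρ) = 1_{2n}`, join in `NC(2n)`. -/
theorem irreducible_iff_arch_ncJoin_top (n : ℕ) (π ρ : Setoid (Fin n))
    (hπ : IsNC π) (hρ : IsNC ρ) :
    ¬ Reducible π ρ ↔ ncJoin (archSetoid π) (archSetoid ρ) = ⊤ :=
  irreducible_iff_arch_ncJoin_top_general n π ρ
end
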